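/- For μ = 1 and γ² > ω (with ω = s_1+1 > 2), one has λ_−(ν̄_±) < 0 where ν̄_± = γ ± √(γ²−ω) and λ_−(ν) = ν² + ω − √(4γ²ν² + 2ω); consequently the interval (ν̄_−, ν̄_+) is contained in (ν_−, ν_+), and the Morse index of m_1(ν) equals 2 for ν ∈ (ν̄_−, ν̄_+), equals 1 for ν ∈ (ν_−, ν̄_−) ∪ (ν̄_+, ν_+), and equals 0 for ν ∈ [0, ν_−) ∪ (ν_+, ∞). -/

import Mathlib

open Matrix Complex

/-- The 3×3 Fourier block `m₁(ν)` of the filament problem with `μ = 1`,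
`ω = s₁ + 1`, `n = 2s₁ + 1`. -/
noncomputable def m₁F (n s₁ γ ν : ℝ) : Matrix (Fin 3) (Fin 3) ℂ :=
  !![(ν ^ 2 - 2 * γ * ν + (s₁ + 1) : ℝ), (-Real.sqrt (n / 2) : ℝ), -(Real.sqrt (n / 2) : ℂ) * Complex.I;
     (-Real.sqrt (n / 2) : ℝ), (ν ^ 2 + s₁ + 2 : ℝ), 2 * γ * ν * Complex.I;
     (Real.sqrt (n / 2) : ℂ) * Complex.I, -(2 * γ * ν * Complex.I), (ν ^ 2 + s₁ : ℝ)]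

/-- `λ₋(ν) = ν² + ω − √(4γ²ν² + 2ω)`. -/
noncomputable def lamM (ω γ ν : ℝ) : ℝ := ν ^ 2 + ω - Real.sqrt (4 * γ ^ 2 * ν ^ 2 + 2 * ω)

/-- Morse index: the number of negative eigenvalues (with multiplicity) of a
Hermitian matrix (and `0` for non-Hermitian matrices). -/
noncomputable def morseIndex {m : ℕ} (A : Matrix (Fin m) (Fin m) ℂ) : ℕ :=
  if h : A.IsHermitian then (Finset.univ.filter fun i => h.eigenvalues i < 0).card else 0

/-!
The characteristic polynomial of `m₁(ν)` is `(X - λ₀)(X - λ₊)(X - λ₋)` with `λ₊ > 0`, so the Morse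
index counts the negative ones among `λ₀` and `λ₋`. Since `λ₀ = (ν - ν̄₋)(ν - ν̄₊)` and
`λ₋λ₊ = (ν² - ν₋²)(ν² - ν₊²)`, for `ν ≥ 0` we get `λ₀ < 0` exactly on `(ν̄₋, ν̄₊)` and `λ₋ < 0`
exactly on `(ν₋, ν₊)`. At `ν̄_±` one has `ν² + ω = 2γν`, so `λ₋ = 2γν - √((2γν)² + 2ω) < 0`:
this puts `ν̄_±` inside `(ν₋, ν₊)`.
-/

open Polynomial Set

theorem morseIndex_eq_countP_of_charpoly_eq {m : ℕ} {A : Matrix (Fin m) (Fin m) ℂ}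
    (hA : A.IsHermitian) {s : Multiset ℝ}
    (h : A.charpoly = (s.map fun r : ℝ => X - C (r : ℂ)).prod) :
    morseIndex A = s.countP (· < 0) := by
  have hs : s = Finset.univ.val.map hA.eigenvalues := by
    apply Multiset.map_injective Complex.ofReal_injective
    have hroots : A.charpoly.roots = s.map (↑) := by
      rw [h, ← roots_multiset_prod_X_sub_C (s.map ((↑) : ℝ → ℂ)), Multiset.map_map]
      rfl
    rw [← hroots, hA.roots_charpoly_eq_eigenvalues, Multiset.map_map]
    rfl
  rw [morseIndex, dif_pos hA, hs, Multiset.countP_map]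
  rfl

noncomputable def lam0 (ω γ ν : ℝ) : ℝ := ν ^ 2 - 2 * γ * ν + ω

noncomputable def lamP (ω γ ν : ℝ) : ℝ := ν ^ 2 + ω + √(4 * γ ^ 2 * ν ^ 2 + 2 * ω)

noncomputable def nuBarM (ω γ : ℝ) : ℝ := γ - √(γ ^ 2 - ω)

noncomputable def nuBarP (ω γ : ℝ) : ℝ := γ + √(γ ^ 2 - ω)

/-- `ν₋`; with `b = ω - 2γ²`, `c = ω² - 2ω`, `ν₋²` and `ν₊²` are the roots of `t² + 2bt + c`. -/
noncomputable def nuM (b c : ℝ) : ℝ := √(-b - √(b ^ 2 - c))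

noncomputable def nuP (b c : ℝ) : ℝ := √(-b + √(b ^ 2 - c))

theorem m₁F_isHermitian (n s₁ γ ν : ℝ) : (m₁F n s₁ γ ν).IsHermitian := by
  ext i j
  fin_cases i <;> fin_cases j <;> simp [m₁F]

theorem m₁F_charpoly {n s₁ : ℝ} (hn : 0 ≤ n) (hs : n = 2 * s₁ + 1) (γ ν : ℝ) :
    (m₁F n s₁ γ ν).charpoly = (X - C (lam0 (s₁ + 1) γ ν : ℂ)) *
      (X - C (lamP (s₁ + 1) γ ν : ℂ)) * (X - C (lamM (s₁ + 1) γ ν : ℂ)) := by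
  set r := √(n / 2) with hr_def
  set R := √(4 * γ ^ 2 * ν ^ 2 + 2 * (s₁ + 1)) with hR_def
  have hr : (r : ℂ) ^ 2 = s₁ + 1 / 2 := by
    rw [← Complex.ofReal_pow, Real.sq_sqrt (by positivity), hs]; push_cast; ring
  have hR : (R : ℂ) ^ 2 = 4 * γ ^ 2 * ν ^ 2 + 2 * (s₁ + 1) := by
    rw [← Complex.ofReal_pow, Real.sq_sqrt (by nlinarith)]; push_cast; ring
  refine Polynomial.funext fun z => ?_
  rw [eval_charpoly, Matrix.det_fin_three]
  simp only [scalar_apply, m₁F, lam0, lamP, lamM, ← hr_def, ← hR_def, ofReal_add, ofReal_sub,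
    ofReal_pow, ofReal_mul, ofReal_ofNat, ofReal_one, ofReal_neg, neg_mul, Fin.isValue,
    Matrix.sub_apply, diagonal_apply_eq, of_apply, cons_val', cons_val_zero, cons_val_fin_one,
    cons_val_one, cons_val, ne_eq, Fin.reduceEq, not_false_eq_true, diagonal_apply_ne, zero_sub,
    mul_neg, sub_neg_eq_add, zero_add, zero_ne_one, one_ne_zero, neg_neg, map_add, map_sub,
    map_pow, map_mul, map_one, eval_mul, eval_sub, eval_X, eval_add, eval_pow, eval_C, eval_one]
  linear_combination
    ((z - (ν ^ 2 - 2 * γ * ν + (s₁ + 1))) * (2 * γ * ν) ^ 2 + 4 * γ * ν * r ^ 2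
      + r ^ 2 * (z - (ν ^ 2 + s₁ + 2))) * Complex.I_sq
    - 2 * (z - (ν ^ 2 - 2 * γ * ν + (s₁ + 1))) * hr
    + (z - (ν ^ 2 - 2 * γ * ν + (s₁ + 1))) * hR

theorem lamP_pos {ω : ℝ} (hω : 0 < ω) (γ ν : ℝ) : 0 < lamP ω γ ν := by
  unfold lamP; positivity

theorem morseIndex_m₁F {n s₁ : ℝ} (hn : 0 ≤ n) (hs : n = 2 * s₁ + 1) (γ ν : ℝ) :
    morseIndex (m₁F n s₁ γ ν) =
      (if lam0 (s₁ + 1) γ ν < 0 then 1 else 0) + (if lamM (s₁ + 1) γ ν < 0 then 1 else 0) := by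
  have hP : ¬ lamP (s₁ + 1) γ ν < 0 := (lamP_pos (by linarith) γ ν).not_gt
  rw [morseIndex_eq_countP_of_charpoly_eq (m₁F_isHermitian n s₁ γ ν)
    (s := {lam0 (s₁ + 1) γ ν, lamP (s₁ + 1) γ ν, lamM (s₁ + 1) γ ν})]
  · simp [Multiset.countP_cons, ← Multiset.cons_zero, hP, add_comm]
  · simp [m₁F_charpoly hn hs, mul_assoc]

theorem sq_sub_mul_sq_sub_neg_iff {p q x : ℝ} (hp : 0 ≤ p) (hpq : p ≤ q) (hx : 0 ≤ x) :
    (x ^ 2 - p ^ 2) * (x ^ 2 - q ^ 2) < 0 ↔ x ∈ Ioo p q := by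
  rw [sub_mul_sub_neg_iff _ (pow_le_pow_left₀ hp hpq 2), mem_Ioo,
    sq_lt_sq₀ hp hx, sq_lt_sq₀ hx (hp.trans hpq)]

theorem nuM_nonneg (b c : ℝ) : 0 ≤ nuM b c := Real.sqrt_nonneg _

theorem nuM_le_nuP (b c : ℝ) : nuM b c ≤ nuP b c :=
  Real.sqrt_le_sqrt (by linarith [Real.sqrt_nonneg (b ^ 2 - c)])

theorem sq_add_two_mul_add_eq {b c : ℝ} (hb : b ≤ 0) (hc : 0 ≤ c) (hbc : c ≤ b ^ 2) (t : ℝ) :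
    t ^ 2 + 2 * b * t + c = (t - nuM b c ^ 2) * (t - nuP b c ^ 2) := by
  have hs : √(b ^ 2 - c) ≤ -b := by
    rw [Real.sqrt_le_left (by linarith)]; linarith
  rw [nuM, nuP, Real.sq_sqrt (by linarith),
    Real.sq_sqrt (by linarith [Real.sqrt_nonneg (b ^ 2 - c)])]
  linear_combination Real.sq_sqrt (sub_nonneg.2 hbc)

section

variable {ω γ ν : ℝ}

theorem lamM_mul_lamP (hω : 0 ≤ ω) :
    lamM ω γ ν * lamP ω γ ν = (ν ^ 2) ^ 2 + 2 * (ω - 2 * γ ^ 2) * ν ^ 2 + (ω ^ 2 - 2 * ω) := by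
  rw [lamM, lamP]
  linear_combination -Real.sq_sqrt (by positivity : 0 ≤ 4 * γ ^ 2 * ν ^ 2 + 2 * ω)

theorem lamM_neg_iff (hω : 2 ≤ ω) (hγ : ω ≤ γ ^ 2) (hν : 0 ≤ ν) :
    lamM ω γ ν < 0 ↔
      ν ∈ Ioo (nuM (ω - 2 * γ ^ 2) (ω ^ 2 - 2 * ω)) (nuP (ω - 2 * γ ^ 2) (ω ^ 2 - 2 * ω)) := by
  have hP : 0 < lamP ω γ ν := lamP_pos (by linarith) γ ν
  rw [← sq_sub_mul_sq_sub_neg_iff (nuM_nonneg _ _) (nuM_le_nuP _ _) hν,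
    ← sq_add_two_mul_add_eq (by nlinarith) (by nlinarith) (by nlinarith),
    ← lamM_mul_lamP (by linarith)]
  exact ⟨fun h => mul_neg_of_neg_of_pos h hP, fun h => neg_of_mul_neg_left h hP.le⟩

theorem lam0_eq_mul (hγ : ω ≤ γ ^ 2) : lam0 ω γ ν = (ν - nuBarM ω γ) * (ν - nuBarP ω γ) := by
  rw [lam0, nuBarM, nuBarP]
  linear_combination Real.sq_sqrt (sub_nonneg.2 hγ)

theorem lam0_neg_iff (hγ : ω ≤ γ ^ 2) : lam0 ω γ ν < 0 ↔ ν ∈ Ioo (nuBarM ω γ) (nuBarP ω γ) := by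
  have hle : nuBarM ω γ ≤ nuBarP ω γ := by
    rw [nuBarM, nuBarP]; linarith [Real.sqrt_nonneg (γ ^ 2 - ω)]
  rw [lam0_eq_mul hγ, sub_mul_sub_neg_iff _ hle, mem_Ioo]

theorem lamM_neg_of_lam0_eq_zero (hω : 0 < ω) (h : lam0 ω γ ν = 0) : lamM ω γ ν < 0 := by
  have hroot : ν ^ 2 + ω = 2 * γ * ν := by rw [lam0] at h; linarith
  rw [lamM, hroot, sub_neg]
  exact Real.lt_sqrt_of_sq_lt (by nlinarith)

theorem lam0_nuBarM (hγ : ω ≤ γ ^ 2) : lam0 ω γ (nuBarM ω γ) = 0 := by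
  rw [lam0_eq_mul hγ, sub_self, zero_mul]

theorem lam0_nuBarP (hγ : ω ≤ γ ^ 2) : lam0 ω γ (nuBarP ω γ) = 0 := by
  rw [lam0_eq_mul hγ, sub_self, mul_zero]

theorem nuBarM_nonneg (hω : 0 ≤ ω) (hγ : 0 ≤ γ) : 0 ≤ nuBarM ω γ := by
  rw [nuBarM, sub_nonneg]
  calc √(γ ^ 2 - ω) ≤ √(γ ^ 2) := Real.sqrt_le_sqrt (by linarith)
    _ = γ := Real.sqrt_sq hγ

theorem nuBarM_mem_Ioo (hω : 2 ≤ ω) (hγ₀ : 0 ≤ γ) (hγ : ω ≤ γ ^ 2) :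
    nuBarM ω γ ∈ Ioo (nuM (ω - 2 * γ ^ 2) (ω ^ 2 - 2 * ω)) (nuP (ω - 2 * γ ^ 2) (ω ^ 2 - 2 * ω)) :=
  (lamM_neg_iff hω hγ (nuBarM_nonneg (by linarith) hγ₀)).1
    (lamM_neg_of_lam0_eq_zero (by linarith) (lam0_nuBarM hγ))

theorem nuBarP_mem_Ioo (hω : 2 ≤ ω) (hγ₀ : 0 ≤ γ) (hγ : ω ≤ γ ^ 2) :
    nuBarP ω γ ∈ Ioo (nuM (ω - 2 * γ ^ 2) (ω ^ 2 - 2 * ω)) (nuP (ω - 2 * γ ^ 2) (ω ^ 2 - 2 * ω)) :=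
  (lamM_neg_iff hω hγ (by rw [nuBarP]; positivity)).1
    (lamM_neg_of_lam0_eq_zero (by linarith) (lam0_nuBarP hγ))

end

theorem morseIndex_m₁F_of_nonneg {n s₁ γ ν : ℝ} (hs : n = 2 * s₁ + 1) (hω : 2 ≤ s₁ + 1)
    (hγ : s₁ + 1 ≤ γ ^ 2) (hν : 0 ≤ ν) :
    morseIndex (m₁F n s₁ γ ν) =
      (if ν ∈ Ioo (nuBarM (s₁ + 1) γ) (nuBarP (s₁ + 1) γ) then 1 else 0) +
      (if ν ∈ Ioo (nuM (s₁ + 1 - 2 * γ ^ 2) ((s₁ + 1) ^ 2 - 2 * (s₁ + 1)))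
        (nuP (s₁ + 1 - 2 * γ ^ 2) ((s₁ + 1) ^ 2 - 2 * (s₁ + 1))) then 1 else 0) := by
  simp only [morseIndex_m₁F (by linarith) hs, lam0_neg_iff hγ, lamM_neg_iff hω hγ hν]

theorem morse_index_m1_filament_mu_one_general (n : ℕ) (s₁ γ : ℝ)
    (hs : (n : ℝ) = 2 * s₁ + 1) (hω : 2 < s₁ + 1) (hγpos : 0 < γ)
    (hγ : γ ^ 2 > s₁ + 1) :
    let ω : ℝ := s₁ + 1
    let b : ℝ := ω - 2 * γ ^ 2
    let c : ℝ := ω ^ 2 - 2 * ω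
    let νbarM : ℝ := γ - Real.sqrt (γ ^ 2 - ω)
    let νbarP : ℝ := γ + Real.sqrt (γ ^ 2 - ω)
    let νM : ℝ := Real.sqrt (-b - Real.sqrt (b ^ 2 - c))
    let νP : ℝ := Real.sqrt (-b + Real.sqrt (b ^ 2 - c))
    lamM ω γ νbarM < 0 ∧ lamM ω γ νbarP < 0 ∧
    Set.Ioo νbarM νbarP ⊆ Set.Ioo νM νP ∧
    (∀ ν ∈ Set.Ioo νbarM νbarP, morseIndex (m₁F n s₁ γ ν) = 2) ∧
    (∀ ν ∈ Set.Ioo νM νbarM ∪ Set.Ioo νbarP νP, morseIndex (m₁F n s₁ γ ν) = 1) ∧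
    (∀ ν ∈ Set.Ico (0 : ℝ) νM ∪ Set.Ioi νP, morseIndex (m₁F n s₁ γ ν) = 0) := by
  intro ω b c νbarM νbarP νM νP
  have hω' : 2 ≤ ω := hω.le
  have hγ' : ω ≤ γ ^ 2 := hγ.le
  have hνM : 0 ≤ νM := Real.sqrt_nonneg _
  have hνP : 0 ≤ νP := Real.sqrt_nonneg _
  have hM : νbarM ∈ Ioo νM νP := nuBarM_mem_Ioo hω' hγpos.le hγ'
  have hP : νbarP ∈ Ioo νM νP := nuBarP_mem_Ioo hω' hγpos.le hγ'
  have hsub : Ioo νbarM νbarP ⊆ Ioo νM νP := Ioo_subset_Ioo hM.1.le hP.2.le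
  have index (ν : ℝ) (hν : 0 ≤ ν) : morseIndex (m₁F n s₁ γ ν) =
      (if ν ∈ Ioo νbarM νbarP then 1 else 0) + (if ν ∈ Ioo νM νP then 1 else 0) :=
    morseIndex_m₁F_of_nonneg hs hω' hγ' hν
  refine ⟨lamM_neg_of_lam0_eq_zero (by linarith) (lam0_nuBarM hγ'),
    lamM_neg_of_lam0_eq_zero (by linarith) (lam0_nuBarP hγ'), hsub, ?_, ?_, ?_⟩
  · intro ν hν
    rw [index ν (hνM.trans (hsub hν).1.le), if_pos hν, if_pos (hsub hν)]
  · rintro ν (⟨h₁, h₂⟩ | ⟨h₁, h₂⟩)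
    · rw [index ν (hνM.trans h₁.le), if_neg (fun h => h₂.not_gt h.1), if_pos ⟨h₁, h₂.trans hM.2⟩]
    · have h₁' : νM < ν := hP.1.trans h₁
      rw [index ν (hνM.trans h₁'.le), if_neg (fun h => h₁.not_gt h.2), if_pos ⟨h₁', h₂⟩]
  · rintro ν (⟨h₀, h⟩ | h)
    · rw [index ν h₀, if_neg (fun h' => h.not_gt (hsub h').1), if_neg (fun h' => h.not_gt h'.1)]
    · rw [index ν (hνP.trans h.le), if_neg (fun h' => h.not_gt (hsub h').2),
        if_neg (fun h' => h.not_gt h'.2)]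

theorem morse_index_m1_filament_mu_one (n : ℕ) (hn : 3 ≤ n) (s₁ γ : ℝ)
    (hs : (n : ℝ) = 2 * s₁ + 1) (hω : 2 < s₁ + 1) (hγpos : 0 < γ)
    (hγ : γ ^ 2 > s₁ + 1) :
    let ω : ℝ := s₁ + 1
    let b : ℝ := ω - 2 * γ ^ 2
    let c : ℝ := ω ^ 2 - 2 * ω
    let νbarM : ℝ := γ - Real.sqrt (γ ^ 2 - ω)
    let νbarP : ℝ := γ + Real.sqrt (γ ^ 2 - ω)
    let νM : ℝ := Real.sqrt (-b - Real.sqrt (b ^ 2 - c))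
    let νP : ℝ := Real.sqrt (-b + Real.sqrt (b ^ 2 - c))
    lamM ω γ νbarM < 0 ∧ lamM ω γ νbarP < 0 ∧
    Set.Ioo νbarM νbarP ⊆ Set.Ioo νM νP ∧
    (∀ ν ∈ Set.Ioo νbarM νbarP, morseIndex (m₁F n s₁ γ ν) = 2) ∧
    (∀ ν ∈ Set.Ioo νM νbarM ∪ Set.Ioo νbarP νP, morseIndex (m₁F n s₁ γ ν) = 1) ∧
    (∀ ν ∈ Set.Ico (0 : ℝ) νM ∪ Set.Ioi νP, morseIndex (m₁F n s₁ γ ν) = 0) :=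
  morse_index_m1_filament_mu_one_general n s₁ γ hs hω hγpos hγ
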